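/- Let m ≥ 2 be an integer with m ≡ 4 (mod 10), let f(x) = x^m on ℤ_5, and let t = ν_5(m + 1). For each integer l ≥ 0, each i ∈ {1, 2}, and each a ∈ {0, 1, …, 5^(t−1) − 1}, let x₀ = 1 + 5^(l+1)·i + 5^(l+2)·a (a 5-adic unit, with inverse x₀⁻¹ in ℤ_5) and set M_{l,a,i} = (x₀ + 5^(t+l+1)ℤ_5) ∪ (x₀⁻¹ + 5^(t+l+1)ℤ_5). Then the sets M_{l,a,i} are pairwise disjoint clopen subsets of ℤ_5, each M_{l,a,i} is a minimal component of f (f(M_{l,a,i}) ⊆ M_{l,a,i} and every forward orbit of f in M_{l,a,i} is dense in M_{l,a,i}), the union of all the M_{l,a,i} together with {1} equals the ball 1 + 5ℤ_5, and moreover for every 5-adic unit x (i.e., x ∉ 5ℤ_5) the second iterate satisfies x^(m²) ∈ 1 + 5ℤ_5. -/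

import Mathlib

open Filter Topology

instance : Fact (Nat.Prime 5) := ⟨by norm_num⟩

/-!
Write `K = t + l + 1`. If `x ≡ 1 mod 5^(l+1)` exactly, lifting the exponent gives
`x^(m+1) ≡ 1 mod 5^K` because `5^t ∥ m + 1`; hence `x ↦ x^m` exchanges the balls
`c + 5^K ℤ_5` and `c⁻¹ + 5^K ℤ_5` around a centre `c ≡ 1 mod 5^(l+1)` exactly. Since also
`5^t ∥ m² - 1`, lifting the exponent once more shows that `x^(m^(2n)) - x^(m^(2n'))` has
valuation exactly `K + v(n - n')`: the even iterates `n < 5^D` are pairwise distinct modulo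
`5^(K+D)`, so by counting they meet every residue class of the ball modulo `5^(K+D)`, and every
orbit is dense.

A point `x ≠ 1` of `1 + 5ℤ_5` lies in the ball around `1 + 5^(l+1) d` with `l + 1 = v(x - 1)`
and `d < 5^t` the first `t` digits of `(x - 1) / 5^(l+1)`. Passing to `x⁻¹` replaces the lowest
digit `d mod 5` by its negative, so exactly one of `x`, `x⁻¹` has lowest digit `1` or `2`.
-/

namespace PadicInt

variable {p : ℕ} [Fact p.Prime]

theorem isUnit_iff_not_dvd {z : ℤ_[p]} : IsUnit z ↔ ¬(p : ℤ_[p]) ∣ z := by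
  rw [isUnit_iff, ← norm_lt_one_iff_dvd, not_lt]
  exact ⟨ge_of_eq, (norm_le_one z).antisymm⟩

theorem isUnit_of_dvd_sub_one {z : ℤ_[p]} (h : (p : ℤ_[p]) ∣ z - 1) : IsUnit z :=
  isUnit_iff_not_dvd.2 fun hz ↦ (isUnit_iff_not_dvd.1 isUnit_one) (by simpa using dvd_sub hz h)

theorem pow_p_dvd_natCast_iff (k n : ℕ) : (p : ℤ_[p]) ^ k ∣ n ↔ p ^ k ∣ n := by
  simpa [← Int.natCast_dvd_natCast] using pow_p_dvd_int_iff k (n : ℤ)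

theorem p_dvd_natCast_iff (n : ℕ) : (p : ℤ_[p]) ∣ n ↔ p ∣ n := by
  simpa using pow_p_dvd_natCast_iff (p := p) 1 n

theorem pow_p_dvd_iff_norm_le (k : ℕ) (z : ℤ_[p]) :
    (p : ℤ_[p]) ^ k ∣ z ↔ ‖z‖ ≤ (p : ℝ) ^ (-(k : ℤ)) := by
  rw [norm_le_pow_iff_mem_span_pow, Ideal.mem_span_singleton]

theorem associated_pow_iff {L : ℕ} {z : ℤ_[p]} :
    Associated ((p : ℤ_[p]) ^ L) z ↔
      (p : ℤ_[p]) ^ L ∣ z ∧ ¬(p : ℤ_[p]) ^ (L + 1) ∣ z := by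
  have hp0 : ((p : ℤ_[p]) ^ L) ≠ 0 := pow_ne_zero _ prime_p.ne_zero
  constructor
  · rintro ⟨u, rfl⟩
    refine ⟨dvd_mul_right _ _, ?_⟩
    rw [pow_succ, mul_dvd_mul_iff_left hp0]
    exact isUnit_iff_not_dvd.1 u.isUnit
  · rintro ⟨⟨w, rfl⟩, hw⟩
    rw [pow_succ, mul_dvd_mul_iff_left hp0] at hw
    exact associated_mul_unit_right _ _ (isUnit_iff_not_dvd.2 hw)

theorem associated_pow_padicValNat {n : ℕ} (hn : n ≠ 0) :
    Associated ((p : ℤ_[p]) ^ padicValNat p n) n := by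
  rw [associated_pow_iff, pow_p_dvd_natCast_iff, pow_p_dvd_natCast_iff]
  exact ⟨pow_padicValNat_dvd, pow_succ_padicValNat_not_dvd hn⟩

theorem eq_of_associated_pow {a b : ℕ} {z : ℤ_[p]} (ha : Associated ((p : ℤ_[p]) ^ a) z)
    (hb : Associated ((p : ℤ_[p]) ^ b) z) : a = b := by
  have h := ha.trans hb.symm
  have hp0 := prime_p (p := p)
  exact le_antisymm ((pow_dvd_pow_iff hp0.ne_zero hp0.not_isUnit).1 h.dvd)
    ((pow_dvd_pow_iff hp0.ne_zero hp0.not_isUnit).1 h.symm.dvd)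

theorem exists_associated_pow_succ {z : ℤ_[p]} (hz : z ≠ 0) (h : (p : ℤ_[p]) ∣ z) :
    ∃ l, Associated ((p : ℤ_[p]) ^ (l + 1)) z := by
  have hv : z.valuation ≠ 0 := by
    intro hv
    have := unitCoeff_spec hz
    rw [hv, pow_zero, mul_one] at this
    exact isUnit_iff_not_dvd.1 (this ▸ (unitCoeff hz).isUnit) h
  refine ⟨z.valuation - 1, ?_⟩
  rw [Nat.sub_add_cancel (Nat.one_le_iff_ne_zero.2 hv)]
  nth_rw 2 [unitCoeff_spec hz]
  rw [mul_comm]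
  exact associated_mul_unit_right _ _ (unitCoeff hz).isUnit

theorem isClopen_setOf_pow_dvd_sub (K : ℕ) (c : ℤ_[p]) :
    IsClopen {x : ℤ_[p] | (p : ℤ_[p]) ^ K ∣ x - c} := by
  convert IsUltrametricDist.isClopen_closedBall c
    (zpow_ne_zero (-(K : ℤ)) (Nat.cast_ne_zero.2 (Fact.out : p.Prime).ne_zero))
  ext x
  exact (pow_p_dvd_iff_norm_le K _).trans (by rw [Metric.mem_closedBall, dist_eq_norm])

theorem mem_closure_of_forall_pow_dvd_sub {s : Set ℤ_[p]} {y : ℤ_[p]}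
    (h : ∀ k : ℕ, ∃ z ∈ s, (p : ℤ_[p]) ^ k ∣ z - y) : y ∈ closure s := by
  refine Metric.mem_closure_iff.2 fun ε hε ↦ ?_
  obtain ⟨k, hk⟩ := exists_pow_neg_lt p hε
  obtain ⟨z, hzs, hz⟩ := h k
  refine ⟨z, hzs, ?_⟩
  rw [dist_eq_norm, norm_sub_rev]
  exact ((pow_p_dvd_iff_norm_le k _).1 hz).trans_lt hk

theorem dvd_pow_sub_one_of_not_dvd {x : ℤ_[p]} (hx : ¬(p : ℤ_[p]) ∣ x) {N : ℕ}
    (hN : p - 1 ∣ N) : (p : ℤ_[p]) ∣ x ^ N - 1 := by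
  have hker (z : ℤ_[p]) : toZMod z = 0 ↔ (p : ℤ_[p]) ∣ z := by
    rw [← RingHom.mem_ker, ker_toZMod, maximalIdeal_eq_span_p, Ideal.mem_span_singleton]
  obtain ⟨k, rfl⟩ := hN
  rw [← hker, map_sub, map_pow, map_one, pow_mul,
    ZMod.pow_card_sub_one_eq_one (mt (hker x).1 hx), one_pow, sub_self]


theorem exists_pow_dvd_sub_of_injective_mod {K D : ℕ} {x y : ℤ_[p]} (s : ℕ → ℤ_[p])
    (hs : ∀ n, (p : ℤ_[p]) ^ K ∣ s n - x)
    (hsep : ∀ n < p ^ D, ∀ n' < p ^ D, (p : ℤ_[p]) ^ (K + D) ∣ s n - s n' → n = n')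
    (hy : (p : ℤ_[p]) ^ K ∣ y - x) : ∃ n, (p : ℤ_[p]) ^ (K + D) ∣ s n - y := by
  have digit (z : ℤ_[p]) (hz : (p : ℤ_[p]) ^ K ∣ z - x) :
      ∃ j : Fin (p ^ D), (p : ℤ_[p]) ^ (K + D) ∣ z - (x + p ^ K * (j : ℕ)) := by
    obtain ⟨w, hw⟩ := hz
    obtain ⟨e, he⟩ := Ideal.mem_span_singleton.1 (appr_spec D w)
    refine ⟨⟨w.appr D, appr_lt w D⟩, e, ?_⟩
    rw [pow_add, mul_assoc, ← he]
    linear_combination hw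
  -- `σ n` is the residue class of `s n` in the ball; being injective, `σ` is onto
  choose σ hσ using fun n : Fin (p ^ D) ↦ digit (s n) (hs n)
  have hσinj : Function.Injective σ := fun n n' h ↦ Fin.ext <| hsep n n.2 n' n'.2 <| by
    simpa [h] using dvd_sub (hσ n) (hσ n')
  obtain ⟨j, hj⟩ := digit y hy
  obtain ⟨n, rfl⟩ := Finite.surjective_of_injective hσinj j
  exact ⟨n, by simpa using dvd_sub (hσ n) hj⟩

theorem associated_pow_prime_sub_one (hp : Odd p) {z : ℤ_[p]} (hz : (p : ℤ_[p]) ∣ z - 1) :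
    Associated ((z - 1) * p) (z ^ p - 1) := by
  obtain ⟨c, hc⟩ := hz
  obtain rfl : z = 1 + p * c := by linear_combination hc
  obtain ⟨e, he⟩ := odd_sq_dvd_geom_sum₂_sub (1 : ℤ_[p]) c hp
  simp only [one_pow, mul_one] at he
  have hgeom : (1 + p * c) ^ p - 1 = (1 + p * c - 1) * (p * (1 + p * e)) := by
    rw [← geom_sum_mul]
    linear_combination (p * c) * he
  rw [hgeom]
  exact (associated_mul_unit_right _ _ (isUnit_of_dvd_sub_one ⟨e, by ring⟩)).mul_left _

theorem associated_pow_sub_one (hp : Odd p) {z : ℤ_[p]} (hz : (p : ℤ_[p]) ∣ z - 1) (N : ℕ) :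
    Associated ((z - 1) * N) (z ^ N - 1) := by
  induction N using Nat.strong_induction_on generalizing z with
  | _ N ih =>
  by_cases hpN : p ∣ N
  · rcases N.eq_zero_or_pos with rfl | hN
    · simp
    obtain ⟨M, rfl⟩ := hpN
    have hzp := associated_pow_prime_sub_one hp hz
    rw [pow_mul, Nat.cast_mul, ← mul_assoc]
    exact (hzp.mul_right _).trans <| ih M (lt_mul_left (pos_of_mul_pos_right hN (Nat.zero_le _))
      (Fact.out : p.Prime).one_lt) ((dvd_mul_of_dvd_left hz _).trans hzp.dvd)
  · have hpN' : ¬(p : ℤ_[p]) ∣ N := (p_dvd_natCast_iff N).not.2 hpN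
    have hS := not_dvd_geom_sum₂ prime_p (y := 1) hz
      (isUnit_iff_not_dvd.1 (isUnit_of_dvd_sub_one hz)) hpN'
    simp only [one_pow, mul_one] at hS
    rw [← geom_sum_mul, mul_comm _ (z - 1)]
    exact ((associated_one_iff_isUnit.2 (isUnit_iff_not_dvd.2 hpN')).trans
      (associated_one_iff_isUnit.2 (isUnit_iff_not_dvd.2 hS)).symm).mul_left _

theorem associated_pow_pow_sub_pow_pow (hp : Odd p) {x : ℤ_[p]} {q : ℕ}
    (hx : (p : ℤ_[p]) ∣ x - 1) (hq : (p : ℤ_[p]) ∣ (q : ℤ_[p]) - 1) (n δ : ℕ) :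
    Associated ((x - 1) * (q - 1) * δ) (x ^ q ^ (n + δ) - x ^ q ^ n) := by
  have hq1 : 1 ≤ q := Nat.one_le_iff_ne_zero.2 <| by
    rintro rfl
    exact isUnit_iff_not_dvd.1 isUnit_one (by simpa using hq)
  have hexp : q ^ (n + δ) = q ^ n + q ^ n * (q ^ δ - 1) := by
    rw [Nat.mul_sub, mul_one, ← pow_add,
      Nat.add_sub_cancel' (Nat.pow_le_pow_right hq1 (Nat.le_add_right n δ))]
  have hcast :
      ((q ^ n * (q ^ δ - 1) : ℕ) : ℤ_[p]) = (q : ℤ_[p]) ^ n * ((q : ℤ_[p]) ^ δ - 1) := by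
    rw [Nat.cast_mul, Nat.cast_sub (Nat.one_le_pow _ _ hq1)]
    push_cast
    ring
  calc (x - 1) * (q - 1) * δ = (x - 1) * (((q : ℤ_[p]) - 1) * δ) := mul_assoc _ _ _
    Associated _ ((x - 1) * ((q : ℤ_[p]) ^ δ - 1)) :=
      (associated_pow_sub_one hp hq δ).mul_left _
    Associated _ ((x - 1) * ((q ^ n * (q ^ δ - 1) : ℕ) : ℤ_[p])) := by
      rw [hcast]
      exact (associated_unit_mul_right _ _ ((isUnit_of_dvd_sub_one hq).pow n)).mul_left _
    Associated _ (x ^ (q ^ n * (q ^ δ - 1)) - 1) := associated_pow_sub_one hp hx _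
    Associated _ (x ^ q ^ n * (x ^ (q ^ n * (q ^ δ - 1)) - 1)) :=
      associated_unit_mul_right _ _ ((isUnit_of_dvd_sub_one hx).pow _)
    _ = x ^ q ^ (n + δ) - x ^ q ^ n := by rw [hexp, pow_add]; ring

theorem setOf_pow_dvd_sub_subset_closure_range_pow_pow (hp : Odd p) {x : ℤ_[p]} {q K : ℕ}
    (hx : (p : ℤ_[p]) ∣ x - 1) (hq : (p : ℤ_[p]) ∣ (q : ℤ_[p]) - 1)
    (hK : Associated ((p : ℤ_[p]) ^ K) ((x - 1) * (q - 1))) :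
    {y | (p : ℤ_[p]) ^ K ∣ y - x} ⊆ closure (Set.range fun n : ℕ ↦ x ^ q ^ n) := by
  have horbit (n δ : ℕ) : Associated ((p : ℤ_[p]) ^ K * δ) (x ^ q ^ (n + δ) - x ^ q ^ n) :=
    (hK.mul_right _).trans (associated_pow_pow_sub_pow_pow hp hx hq n δ)
  have hsep (D : ℕ) : ∀ n < p ^ D, ∀ n' < p ^ D,
      (p : ℤ_[p]) ^ (K + D) ∣ x ^ q ^ n - x ^ q ^ n' → n = n' := by
    intro n hn n' hn' h
    wlog hle : n' ≤ n generalizing n n'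
    · exact (this n' hn' n hn (dvd_sub_comm.1 h) (le_of_not_ge hle)).symm
    obtain ⟨δ, rfl⟩ := Nat.exists_eq_add_of_le hle
    rw [← (horbit n' δ).dvd_iff_dvd_right, pow_add,
      mul_dvd_mul_iff_left (pow_ne_zero _ prime_p.ne_zero), pow_p_dvd_natCast_iff] at h
    simpa using Nat.eq_zero_of_dvd_of_lt h (by omega)
  intro y hy
  refine mem_closure_of_forall_pow_dvd_sub fun D ↦ ?_
  obtain ⟨n, hn⟩ := exists_pow_dvd_sub_of_injective_mod (fun n ↦ x ^ q ^ n)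
    (fun n ↦ by simpa using (dvd_mul_right _ _).trans (horbit 0 n).dvd) (hsep D) hy
  exact ⟨_, ⟨n, rfl⟩, (pow_dvd_pow _ (Nat.le_add_left D K)).trans hn⟩

theorem isUnit_one_add_pow_succ_mul (l : ℕ) (z : ℤ_[p]) :
    IsUnit (1 + (p : ℤ_[p]) ^ (l + 1) * z) :=
  isUnit_of_dvd_sub_one ⟨p ^ l * z, by ring⟩

theorem associated_one_add_pow_succ_mul_sub_one (l : ℕ) {d : ℕ} (hd : ¬p ∣ d) :
    Associated ((p : ℤ_[p]) ^ (l + 1)) (1 + (p : ℤ_[p]) ^ (l + 1) * d - 1) := by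
  rw [add_sub_cancel_left]
  exact associated_mul_unit_right _ _ (isUnit_iff_not_dvd.2 ((p_dvd_natCast_iff d).not.2 hd))

theorem isUnit_of_pow_dvd_sub {K : ℕ} {x c : ℤ_[p]} (hK : K ≠ 0) (hc : IsUnit c)
    (h : (p : ℤ_[p]) ^ K ∣ x - c) : IsUnit x :=
  isUnit_iff_not_dvd.2 fun hx ↦ isUnit_iff_not_dvd.1 hc <| by
    simpa using dvd_sub hx ((dvd_pow_self _ hK).trans h)

theorem pow_dvd_inverse_sub_inverse {K : ℕ} {x c : ℤ_[p]} (hK : K ≠ 0) (hc : IsUnit c)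
    (h : (p : ℤ_[p]) ^ K ∣ x - c) : (p : ℤ_[p]) ^ K ∣ Ring.inverse x - Ring.inverse c := by
  have hx := Ring.inverse_mul_cancel _ (isUnit_of_pow_dvd_sub hK hc h)
  have hc := Ring.inverse_mul_cancel _ hc
  have : Ring.inverse x - Ring.inverse c = -(Ring.inverse x * Ring.inverse c) * (x - c) := by
    linear_combination Ring.inverse c * hx - Ring.inverse x * hc
  exact this ▸ h.mul_left _

theorem pow_dvd_inverse_sub_of_pow_dvd_sub_inverse {K : ℕ} {x c : ℤ_[p]} (hK : K ≠ 0)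
    (hc : IsUnit c) (h : (p : ℤ_[p]) ^ K ∣ x - Ring.inverse c) :
    (p : ℤ_[p]) ^ K ∣ Ring.inverse x - c := by
  simpa [Ring.inverse_inverse hc] using pow_dvd_inverse_sub_inverse hK hc.ringInverse h

theorem associated_inverse_sub_one {a c : ℤ_[p]} (hc : IsUnit c) (h : Associated a (c - 1)) :
    Associated a (Ring.inverse c - 1) := by
  have : Ring.inverse c - 1 = -Ring.inverse c * (c - 1) := by
    linear_combination Ring.inverse_mul_cancel _ hc
  exact this ▸ h.trans (associated_unit_mul_right _ _ hc.ringInverse.neg)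

theorem associated_sub_one_of_pow_dvd_sub {L : ℕ} {x c : ℤ_[p]}
    (hc : Associated ((p : ℤ_[p]) ^ L) (c - 1)) (hx : (p : ℤ_[p]) ^ (L + 1) ∣ x - c) :
    Associated ((p : ℤ_[p]) ^ L) (x - 1) := by
  rw [associated_pow_iff] at hc ⊢
  refine ⟨sub_add_sub_cancel x c 1 ▸ dvd_add ((pow_dvd_pow _ L.le_succ).trans hx) hc.1,
    fun h ↦ hc.2 ?_⟩
  simpa using dvd_sub h hx


def ballPair (K : ℕ) (c : ℤ_[p]) : Set ℤ_[p] :=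
  {x | (p : ℤ_[p]) ^ K ∣ x - c} ∪ {x | (p : ℤ_[p]) ^ K ∣ x - Ring.inverse c}

theorem ballPair_inverse {K : ℕ} {c : ℤ_[p]} (hc : IsUnit c) :
    ballPair K (Ring.inverse c) = ballPair K c := by
  rw [ballPair, ballPair, Ring.inverse_inverse hc, Set.union_comm]

theorem isClopen_ballPair (K : ℕ) (c : ℤ_[p]) : IsClopen (ballPair K c) :=
  (isClopen_setOf_pow_dvd_sub K c).union (isClopen_setOf_pow_dvd_sub K _)

section Monomial

variable (hp : Odd p) {m t l : ℕ} {c x : ℤ_[p]}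
include hp

theorem pow_dvd_pow_sub_inverse (hm : (p : ℤ_[p]) ^ t ∣ (m : ℤ_[p]) + 1)
    (hc : (p : ℤ_[p]) ^ (l + 1) ∣ c - 1) (hx : (p : ℤ_[p]) ^ (t + l + 1) ∣ x - c) :
    (p : ℤ_[p]) ^ (t + l + 1) ∣ x ^ m - Ring.inverse c := by
  have hx1 : (p : ℤ_[p]) ^ (l + 1) ∣ x - 1 :=
    sub_add_sub_cancel x c 1 ▸ dvd_add ((pow_dvd_pow _ (by omega)).trans hx) hc
  have hxu : IsUnit x := isUnit_of_dvd_sub_one ((dvd_pow_self _ l.succ_ne_zero).trans hx1)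
  have hcu : IsUnit c := isUnit_of_dvd_sub_one ((dvd_pow_self _ l.succ_ne_zero).trans hc)
  have hlte : (p : ℤ_[p]) ^ (t + l + 1) ∣ x ^ (m + 1) - 1 := by
    refine dvd_trans ?_ (associated_pow_sub_one hp ((dvd_pow_self _ l.succ_ne_zero).trans hx1)
      (m + 1)).dvd
    rw [add_assoc, pow_add, mul_comm, Nat.cast_succ]
    exact mul_dvd_mul hx1 hm
  have : x ^ m - Ring.inverse c =
      Ring.inverse x * (x ^ (m + 1) - 1) + (Ring.inverse x - Ring.inverse c) := by
    linear_combination -x ^ m * Ring.inverse_mul_cancel _ hxu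
  rw [this]
  exact dvd_add (hlte.mul_left _) (pow_dvd_inverse_sub_inverse (by omega) hcu hx)

theorem pow_mem_ballPair (hm : (p : ℤ_[p]) ^ t ∣ (m : ℤ_[p]) + 1)
    (hc : (p : ℤ_[p]) ^ (l + 1) ∣ c - 1) (hx : x ∈ ballPair (t + l + 1) c) :
    x ^ m ∈ ballPair (t + l + 1) c := by
  have hcu : IsUnit c := isUnit_of_dvd_sub_one ((dvd_pow_self _ l.succ_ne_zero).trans hc)
  rcases hx with hx | hx
  · exact Or.inr (pow_dvd_pow_sub_inverse hp hm hc hx)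
  · have hc' := (associated_inverse_sub_one hcu (Associated.refl _)).dvd
    rw [← ballPair_inverse hcu]
    exact Or.inr (pow_dvd_pow_sub_inverse hp hm (hc.trans hc') hx)

theorem associated_sq_sub_one (ht : 1 ≤ t)
    (hm : Associated ((p : ℤ_[p]) ^ t) ((m : ℤ_[p]) + 1)) :
    Associated ((p : ℤ_[p]) ^ t) (((m ^ 2 : ℕ) : ℤ_[p]) - 1) := by
  have hm1 : IsUnit ((m : ℤ_[p]) - 1) := isUnit_iff_not_dvd.2 fun h ↦ by
    have h2 : (p : ℤ_[p]) ^ 1 ∣ ((2 : ℕ) : ℤ_[p]) := by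
      convert dvd_sub ((dvd_pow_self _ (by omega)).trans hm.dvd) h using 1 <;> push_cast <;> ring
    rw [pow_p_dvd_natCast_iff, pow_one,
      Nat.prime_dvd_prime_iff_eq Fact.out Nat.prime_two] at h2
    exact Nat.not_even_iff_odd.2 hp (h2 ▸ even_two)
  rw [Nat.cast_pow, show (m : ℤ_[p]) ^ 2 - 1 = (m + 1) * (m - 1) by ring]
  exact hm.trans (associated_mul_unit_right _ _ hm1)

theorem setOf_pow_dvd_sub_subset_closure_range_pow_sq_pow (ht : 1 ≤ t)
    (hm : Associated ((p : ℤ_[p]) ^ t) ((m : ℤ_[p]) + 1))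
    (hc : Associated ((p : ℤ_[p]) ^ (l + 1)) (c - 1))
    (hx : (p : ℤ_[p]) ^ (t + l + 1) ∣ x - c) :
    {y | (p : ℤ_[p]) ^ (t + l + 1) ∣ y - c} ⊆
      closure (Set.range fun n : ℕ ↦ x ^ (m ^ 2) ^ n) := by
  have hx1 : Associated ((p : ℤ_[p]) ^ (l + 1)) (x - 1) :=
    associated_sub_one_of_pow_dvd_sub hc ((pow_dvd_pow _ (by omega)).trans hx)
  have hq := associated_sq_sub_one hp ht hm
  intro y hy
  refine setOf_pow_dvd_sub_subset_closure_range_pow_pow hp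
    ((dvd_pow_self _ l.succ_ne_zero).trans hx1.dvd) ((dvd_pow_self _ (by omega)).trans hq.dvd)
    ?_ (sub_sub_sub_cancel_right y x c ▸ dvd_sub hy hx)
  rw [show t + l + 1 = (l + 1) + t by omega, pow_add]
  exact hx1.mul_mul hq

theorem ballPair_subset_closure_range_pow (ht : 1 ≤ t)
    (hm : Associated ((p : ℤ_[p]) ^ t) ((m : ℤ_[p]) + 1))
    (hc : Associated ((p : ℤ_[p]) ^ (l + 1)) (c - 1)) (hx : x ∈ ballPair (t + l + 1) c) :
    ballPair (t + l + 1) c ⊆ closure (Set.range fun n : ℕ ↦ x ^ m ^ n) := by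
  have hcu : IsUnit c := isUnit_of_dvd_sub_one ((dvd_pow_self _ l.succ_ne_zero).trans hc.dvd)
  wlog hxc : (p : ℤ_[p]) ^ (t + l + 1) ∣ x - c generalizing c
  · rw [← ballPair_inverse hcu] at hx ⊢
    exact this (associated_inverse_sub_one hcu hc) hx hcu.ringInverse
      ((ballPair_inverse hcu ▸ hx).resolve_left hxc)
  have hrange (k : ℕ) :
      Set.range (fun n : ℕ ↦ (x ^ m ^ k) ^ (m ^ 2) ^ n) ⊆
        Set.range fun n : ℕ ↦ x ^ m ^ n := by
    rintro _ ⟨n, rfl⟩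
    exact ⟨2 * n + k, by simp only [← pow_mul, pow_add, mul_comm]⟩
  rintro y (hy | hy)
  · refine closure_mono (hrange 0) ?_
    simpa using setOf_pow_dvd_sub_subset_closure_range_pow_sq_pow hp ht hm hc hxc hy
  · refine closure_mono (hrange 1) ?_
    simpa using setOf_pow_dvd_sub_subset_closure_range_pow_sq_pow hp ht hm
      (associated_inverse_sub_one hcu hc) (pow_dvd_pow_sub_inverse hp hm.dvd hc.dvd hxc) hy

end Monomial

theorem exists_lt_pow_pow_dvd_sub_one_add {t l : ℕ} (ht : 1 ≤ t) {z : ℤ_[p]}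
    (hz : Associated ((p : ℤ_[p]) ^ (l + 1)) (z - 1)) :
    ∃ d < p ^ t, ¬p ∣ d ∧
      (p : ℤ_[p]) ^ (t + l + 1) ∣ z - (1 + (p : ℤ_[p]) ^ (l + 1) * (d : ℤ_[p])) := by
  obtain ⟨u, hu⟩ := hz
  obtain ⟨e, he⟩ := Ideal.mem_span_singleton.1 (appr_spec t (u : ℤ_[p]))
  refine ⟨u.1.appr t, appr_lt _ _, fun hd ↦ isUnit_iff_not_dvd.1 u.isUnit ?_, e, ?_⟩
  · simpa using
      dvd_add ((dvd_pow_self _ (by omega)).trans ⟨e, he⟩) ((p_dvd_natCast_iff _).2 hd)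
  · rw [show t + l + 1 = (l + 1) + t by omega, pow_add _ (l + 1) t, mul_assoc, ← he]
    linear_combination -hu

theorem dvd_add_of_mul_eq_one {l : ℕ} {a b x y : ℤ_[p]} (hxy : x * y = 1)
    (hx : (p : ℤ_[p]) ^ (l + 2) ∣ x - (1 + (p : ℤ_[p]) ^ (l + 1) * a))
    (hy : (p : ℤ_[p]) ^ (l + 2) ∣ y - (1 + (p : ℤ_[p]) ^ (l + 1) * b)) :
    (p : ℤ_[p]) ∣ a + b := by
  obtain ⟨e, he⟩ := hx
  obtain ⟨f, hf⟩ := hy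
  -- `x = 1 + p ^ (l + 1) * (a + p * e)`, `y = 1 + p ^ (l + 1) * (b + p * f)`; expand `x * y = 1`
  refine ⟨-(e + f) - p ^ l * (a + p * e) * (b + p * f),
    mul_left_cancel₀ (pow_ne_zero (l + 1) prime_p.ne_zero) ?_⟩
  linear_combination hxy - y * he - (1 + (p : ℤ_[p]) ^ (l + 1) * a + p ^ (l + 2) * e) * hf

theorem dvd_sub_one_of_mem_ballPair {K : ℕ} {c x : ℤ_[p]} (hK : K ≠ 0)
    (hc : (p : ℤ_[p]) ∣ c - 1) (hx : x ∈ ballPair K c) : (p : ℤ_[p]) ∣ x - 1 := by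
  have hcu := isUnit_of_dvd_sub_one hc
  rcases hx with hx | hx
  · exact sub_add_sub_cancel x c 1 ▸ dvd_add ((dvd_pow_self _ hK).trans hx) hc
  · exact sub_add_sub_cancel x _ 1 ▸ dvd_add ((dvd_pow_self _ hK).trans hx)
      (hc.trans (associated_inverse_sub_one hcu (Associated.refl _)).dvd)

section Decomposition

variable {t l l' d d' : ℕ}

theorem eq_of_pow_dvd_sub_one_add (ht : 1 ≤ t) (hd : d < p ^ t) (hd' : d' < p ^ t)
    (hpd : ¬p ∣ d) (hpd' : ¬p ∣ d') {x : ℤ_[p]}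
    (hx : (p : ℤ_[p]) ^ (t + l + 1) ∣ x - (1 + (p : ℤ_[p]) ^ (l + 1) * (d : ℤ_[p])))
    (hx' : (p : ℤ_[p]) ^ (t + l' + 1) ∣ x - (1 + (p : ℤ_[p]) ^ (l' + 1) * (d' : ℤ_[p]))) :
    l = l' ∧ d = d' := by
  have hl : l + 1 = l' + 1 := eq_of_associated_pow
    (associated_sub_one_of_pow_dvd_sub (associated_one_add_pow_succ_mul_sub_one l hpd)
      ((pow_dvd_pow _ (by omega)).trans hx))
    (associated_sub_one_of_pow_dvd_sub (associated_one_add_pow_succ_mul_sub_one l' hpd')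
      ((pow_dvd_pow _ (by omega)).trans hx'))
  obtain rfl : l = l' := by omega
  refine ⟨rfl, ?_⟩
  have h := dvd_sub hx' hx
  rw [sub_sub_sub_cancel_left, add_sub_add_left_eq_sub, ← mul_sub,
    show t + l + 1 = (l + 1) + t by omega, pow_add,
    mul_dvd_mul_iff_left (pow_ne_zero _ prime_p.ne_zero)] at h
  have h' := (pow_p_dvd_int_iff t ((d : ℤ) - d')).1 (by push_cast; exact h)
  exact ((Nat.modEq_iff_dvd.2 (by exact_mod_cast h')).eq_of_lt_of_lt hd' hd).symm

theorem dvd_add_of_pow_dvd_sub_of_pow_dvd_sub_inverse (ht : 1 ≤ t) (hpd : ¬p ∣ d)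
    (hpd' : ¬p ∣ d') {x : ℤ_[p]}
    (hx : (p : ℤ_[p]) ^ (t + l + 1) ∣ x - (1 + (p : ℤ_[p]) ^ (l + 1) * (d : ℤ_[p])))
    (hx' : (p : ℤ_[p]) ^ (t + l' + 1) ∣
      x - Ring.inverse (1 + (p : ℤ_[p]) ^ (l' + 1) * (d' : ℤ_[p]))) :
    p ∣ d + d' := by
  have hc' := isUnit_one_add_pow_succ_mul (p := p) l' d'
  have hxu : IsUnit x := isUnit_of_pow_dvd_sub (by omega) hc'.ringInverse hx'
  have hy := pow_dvd_inverse_sub_of_pow_dvd_sub_inverse (by omega) hc' hx'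
  have hx1 := associated_sub_one_of_pow_dvd_sub (associated_one_add_pow_succ_mul_sub_one l hpd)
    ((pow_dvd_pow _ (by omega)).trans hx)
  have hy1 := associated_sub_one_of_pow_dvd_sub (associated_one_add_pow_succ_mul_sub_one l' hpd')
    ((pow_dvd_pow _ (by omega)).trans hy)
  obtain rfl : l = l' := by
    have := eq_of_associated_pow hx1
      (Ring.inverse_inverse hxu ▸ associated_inverse_sub_one hxu.ringInverse hy1)
    omega
  rw [← p_dvd_natCast_iff, Nat.cast_add]
  exact dvd_add_of_mul_eq_one (Ring.mul_inverse_cancel _ hxu)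
    ((pow_dvd_pow _ (by omega)).trans hx) ((pow_dvd_pow _ (by omega)).trans hy)

theorem disjoint_ballPair (ht : 1 ≤ t) (hd : d < p ^ t) (hd' : d' < p ^ t)
    (hpd : ¬p ∣ d) (hpd' : ¬p ∣ d') (hdd' : ¬p ∣ d + d') (hne : (l, d) ≠ (l', d')) :
    Disjoint (ballPair (t + l + 1) (1 + (p : ℤ_[p]) ^ (l + 1) * (d : ℤ_[p])))
      (ballPair (t + l' + 1) (1 + (p : ℤ_[p]) ^ (l' + 1) * (d' : ℤ_[p]))) := by
  refine Set.disjoint_left.2 ?_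
  rintro x (hx | hx) (hx' | hx')
  · exact hne (Prod.ext_iff.2 (eq_of_pow_dvd_sub_one_add ht hd hd' hpd hpd' hx hx'))
  · exact hdd' (dvd_add_of_pow_dvd_sub_of_pow_dvd_sub_inverse ht hpd hpd' hx hx')
  · exact hdd' (add_comm d' d ▸ dvd_add_of_pow_dvd_sub_of_pow_dvd_sub_inverse ht hpd' hpd hx' hx)
  · have hc := isUnit_one_add_pow_succ_mul (p := p)
    exact hne (Prod.ext_iff.2 (eq_of_pow_dvd_sub_one_add ht hd hd' hpd hpd'
      (pow_dvd_inverse_sub_of_pow_dvd_sub_inverse (by omega) (hc _ _) hx)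
      (pow_dvd_inverse_sub_of_pow_dvd_sub_inverse (by omega) (hc _ _) hx')))

theorem exists_mem_ballPair (hp : Odd p) (ht : 1 ≤ t) {x : ℤ_[p]} (hx : (p : ℤ_[p]) ∣ x - 1)
    (hx1 : x ≠ 1) : ∃ l d, d < p ^ t ∧ ¬p ∣ d ∧ 2 * (d % p) < p ∧
      x ∈ ballPair (t + l + 1) (1 + (p : ℤ_[p]) ^ (l + 1) * (d : ℤ_[p])) := by
  obtain ⟨l, hl⟩ := exists_associated_pow_succ (sub_ne_zero.2 hx1) hx
  have hxu : IsUnit x := isUnit_of_dvd_sub_one hx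
  obtain ⟨d, hd, hpd, hxd⟩ := exists_lt_pow_pow_dvd_sub_one_add ht hl
  obtain ⟨d', hd', hpd', hxd'⟩ :=
    exists_lt_pow_pow_dvd_sub_one_add ht (associated_inverse_sub_one hxu hl)
  have hxd'' : (p : ℤ_[p]) ^ (t + l + 1) ∣
      x - Ring.inverse (1 + (p : ℤ_[p]) ^ (l + 1) * (d' : ℤ_[p])) := by
    simpa [Ring.inverse_inverse hxu] using
      pow_dvd_inverse_sub_inverse (by omega) (isUnit_one_add_pow_succ_mul _ _) hxd'
  have hsum : d % p + d' % p = p := by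
    obtain ⟨k, hk⟩ : p ∣ d % p + d' % p := (Nat.dvd_iff_mod_eq_zero ..).2 <| by
      rw [← Nat.add_mod]
      exact Nat.mod_eq_zero_of_dvd
        (dvd_add_of_pow_dvd_sub_of_pow_dvd_sub_inverse ht hpd hpd' hxd hxd'')
    have hp0 := (Fact.out : p.Prime).pos
    have h1 := Nat.mod_lt d hp0
    have h2 := Nat.mod_lt d' hp0
    have h3 := Nat.pos_of_ne_zero (mt Nat.dvd_of_mod_eq_zero hpd)
    obtain rfl : k = 1 := by
      have : k < 2 := by by_contra! h; nlinarith
      have : k ≠ 0 := by rintro rfl; omega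
      omega
    omega
  by_cases h2 : 2 * (d % p) < p
  · exact ⟨l, d, hd, hpd, h2, Or.inl hxd⟩
  · exact ⟨l, d', hd', hpd', by obtain ⟨r, hr⟩ := hp; omega, Or.inr hxd''⟩

end Decomposition

end PadicInt

open PadicInt in
theorem monomial_Z5_four_mod_ten_decomposition_general (m : ℕ) (hmod : m % 10 = 4)
    (t : ℕ) (ht : t = padicValNat 5 (m + 1))
    (x₀ : ℕ → ℕ → ℕ → ℤ_[5])
    (hx₀ : ∀ l a i, x₀ l a i = 1 + 5 ^ (l + 1) * (i : ℤ_[5]) + 5 ^ (l + 2) * (a : ℤ_[5]))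
    (M : ℕ → ℕ → ℕ → Set ℤ_[5])
    (hM : ∀ l a i, M l a i =
      {x : ℤ_[5] | (5 : ℤ_[5]) ^ (t + l + 1) ∣ x - x₀ l a i} ∪
      {x : ℤ_[5] | (5 : ℤ_[5]) ^ (t + l + 1) ∣ x - Ring.inverse (x₀ l a i)}) :
    (∀ l a i, a < 5 ^ (t - 1) → (i = 1 ∨ i = 2) → IsUnit (x₀ l a i)) ∧
    (∀ l a i l' a' i',
      a < 5 ^ (t - 1) → a' < 5 ^ (t - 1) → (i = 1 ∨ i = 2) → (i' = 1 ∨ i' = 2) →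
      (l, a, i) ≠ (l', a', i') → Disjoint (M l a i) (M l' a' i')) ∧
    (∀ l a i, a < 5 ^ (t - 1) → (i = 1 ∨ i = 2) →
      IsClopen (M l a i) ∧
      (∀ x ∈ M l a i, x ^ m ∈ M l a i) ∧
      (∀ x ∈ M l a i, M l a i ⊆ closure (Set.range fun n : ℕ => x ^ m ^ n))) ∧
    ((⋃ l : ℕ, ⋃ a ∈ Finset.range (5 ^ (t - 1)), ⋃ i ∈ ({1, 2} : Set ℕ), M l a i)
        ∪ {1} = {x : ℤ_[5] | (5 : ℤ_[5]) ∣ x - 1}) ∧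
    (∀ x : ℤ_[5], ¬ (5 : ℤ_[5]) ∣ x → (5 : ℤ_[5]) ∣ x ^ m ^ 2 - 1) := by
  have ht1 : 1 ≤ t := ht ▸ one_le_padicValNat_of_dvd (by omega) (by omega)
  have h5t : 5 ^ t = 5 * 5 ^ (t - 1) := by rw [← pow_succ']; congr; omega
  have hm : Associated ((5 : ℤ_[5]) ^ t) ((m : ℤ_[5]) + 1) := by
    simpa [← ht] using associated_pow_padicValNat (p := 5) (n := m + 1) (by omega)
  have hx₀' (l a i : ℕ) :
      x₀ l a i = 1 + (5 : ℤ_[5]) ^ (l + 1) * ((i + 5 * a : ℕ) : ℤ_[5]) := by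
    rw [hx₀]; push_cast; ring
  have hM' (l a i : ℕ) : M l a i = ballPair (t + l + 1) (x₀ l a i) := by
    simp [hM, ballPair]
  refine ⟨fun l a i _ _ ↦ hx₀' l a i ▸ isUnit_one_add_pow_succ_mul _ _, ?_,
    fun l a i ha hi ↦ ?_, ?_, fun x hx ↦ ?_⟩
  · intro l a i l' a' i' ha ha' hi hi' hne
    rw [hM', hM', hx₀', hx₀']
    refine disjoint_ballPair ht1 (by omega) (by omega) (by omega) (by omega) (by omega) ?_
    simp only [ne_eq, Prod.mk.injEq] at hne ⊢
    omega
  · rw [hM', hx₀']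
    have hc := associated_one_add_pow_succ_mul_sub_one (p := 5) l (d := i + 5 * a) (by omega)
    exact ⟨isClopen_ballPair _ _, fun x hx ↦ pow_mem_ballPair (by decide) hm.dvd hc.dvd hx,
      fun x hx ↦ ballPair_subset_closure_range_pow (by decide) ht1 hm hc hx⟩
  · ext x
    simp only [Set.mem_union, Set.mem_iUnion, Finset.mem_range, Set.mem_insert_iff,
      Set.mem_singleton_iff, Set.mem_ofPred_eq, exists_prop, hM', hx₀']
    constructor
    · rintro (⟨l, a, -, i, -, hx⟩ | rfl)
      · exact dvd_sub_one_of_mem_ballPair (by omega)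
          ⟨5 ^ l * ((i + 5 * a : ℕ) : ℤ_[5]), by ring⟩ hx
      · simp
    · intro hx
      rcases eq_or_ne x 1 with rfl | hx1
      · exact Or.inr rfl
      obtain ⟨l, d, hd, hpd, h2, hxd⟩ := exists_mem_ballPair (p := 5) (by decide) ht1 hx hx1
      exact Or.inl ⟨l, d / 5, by omega, d % 5, by omega, by rwa [Nat.mod_add_div]⟩
  · exact dvd_pow_sub_one_of_not_dvd hx
      (by simpa using pow_dvd_pow_of_dvd (show 2 ∣ m by omega) 2)

/-- Minimal decomposition for `x ↦ x^m` on `ℤ_5` with `m ≡ 4 (mod 10)`: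
with `x₀ = 1 + 5^(l+1)i + 5^(l+2)a` (a 5-adic unit), the sets
`M_{l,a,i} = (x₀ + 5^(t+l+1)ℤ_5) ∪ (x₀⁻¹ + 5^(t+l+1)ℤ_5)` are pairwise disjoint clopen
minimal components, together with `{1}` they cover exactly the ball `1 + 5ℤ_5`, and
for every 5-adic unit `x` the second iterate `x^(m²)` lies in `1 + 5ℤ_5`. -/
theorem monomial_Z5_four_mod_ten_decomposition (m : ℕ) (hm : 2 ≤ m) (hmod : m % 10 = 4)
    (t : ℕ) (ht : t = padicValNat 5 (m + 1))
    (x₀ : ℕ → ℕ → ℕ → ℤ_[5])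
    (hx₀ : ∀ l a i, x₀ l a i = 1 + 5 ^ (l + 1) * (i : ℤ_[5]) + 5 ^ (l + 2) * (a : ℤ_[5]))
    (M : ℕ → ℕ → ℕ → Set ℤ_[5])
    (hM : ∀ l a i, M l a i =
      {x : ℤ_[5] | (5 : ℤ_[5]) ^ (t + l + 1) ∣ x - x₀ l a i} ∪
      {x : ℤ_[5] | (5 : ℤ_[5]) ^ (t + l + 1) ∣ x - Ring.inverse (x₀ l a i)}) :
    (∀ l a i, a < 5 ^ (t - 1) → (i = 1 ∨ i = 2) → IsUnit (x₀ l a i)) ∧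
    (∀ l a i l' a' i',
      a < 5 ^ (t - 1) → a' < 5 ^ (t - 1) → (i = 1 ∨ i = 2) → (i' = 1 ∨ i' = 2) →
      (l, a, i) ≠ (l', a', i') → Disjoint (M l a i) (M l' a' i')) ∧
    (∀ l a i, a < 5 ^ (t - 1) → (i = 1 ∨ i = 2) →
      IsClopen (M l a i) ∧
      (∀ x ∈ M l a i, x ^ m ∈ M l a i) ∧
      (∀ x ∈ M l a i, M l a i ⊆ closure (Set.range fun n : ℕ => x ^ m ^ n))) ∧
    ((⋃ l : ℕ, ⋃ a ∈ Finset.range (5 ^ (t - 1)), ⋃ i ∈ ({1, 2} : Set ℕ), M l a i)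
        ∪ {1} = {x : ℤ_[5] | (5 : ℤ_[5]) ∣ x - 1}) ∧
    (∀ x : ℤ_[5], ¬ (5 : ℤ_[5]) ∣ x → (5 : ℤ_[5]) ∣ x ^ m ^ 2 - 1) :=
  monomial_Z5_four_mod_ten_decomposition_general m hmod t ht x₀ hx₀ M hM
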